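/- Let Σ = {a, b}. For a word w ∈ Σ*, let N(w) denote the signed number of factorizations of w into factors from {a, b, ba}: N(w) = Σ (−1)^{#{i : uᵢ = ba}}, the sum ranging over all finite sequences (u₁, …, u_k) of words with each uᵢ ∈ {a, b, ba} and u₁u₂⋯u_k = w (the empty word has exactly the empty factorization, so N(λ) = 1). Then N(w) = 1 if w ∈ a*b* (i.e., w = aⁱbʲ for some i, j ≥ 0) and N(w) = 0 otherwise. -/

import Mathlib

/-!
Expanding a factorization by its first factor gives, for every nonempty word `w`,
`N(w) = ∑ ε(u) N(w')` over the factors `u` with `w = u w'`, where `ε(ba) = -1` and `ε = 1`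
otherwise. A word starting with `a`, or with a `b` not followed by `a`, has a single such
factor, so `N` is unchanged by deleting its first letter; and `N(ba s) = N(a s) - N(s) = 0`.
-/

/-- The two-letter alphabet `{a, b}`. -/
inductive AB : Type
  | a
  | b
deriving DecidableEq

open AB

/-- `N(w)`: the signed number of factorizations of `w` into factors from
`{a, b, ba}`, a factorization counting with sign `(-1)^(number of `ba` factors)`. -/
noncomputable def signedFactorCount (w : List AB) : ℤ :=
  ∑ᶠ l ∈ {l : List (List AB) |
      (∀ u ∈ l, u = [a] ∨ u = [b] ∨ u = [b, a]) ∧ l.flatten = w},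
    (-1 : ℤ) ^ (l.countP (fun u => u = [b, a]))

namespace List

variable {α R : Type*}

def factorizations (F : Set (List α)) (w : List α) : Set (List (List α)) :=
  {l | (∀ u ∈ l, u ∈ F) ∧ l.flatten = w}

noncomputable def weightedFactorCount [Semiring R] (F : Set (List α)) (c : List α → R)
    (w : List α) : R :=
  ∑ᶠ l ∈ factorizations F w, (l.map c).prod

variable {F : Set (List α)} {w : List α}

theorem factorizations_nil (hnil : [] ∉ F) : factorizations F [] = {[]} := by
  ext l
  simp only [factorizations, Set.mem_ofPred_eq, flatten_eq_nil_iff, Set.mem_singleton_iff]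
  refine ⟨fun ⟨hmem, hempty⟩ => eq_nil_iff_forall_not_mem.2 fun u hu => hnil ?_, ?_⟩
  · exact hempty u hu ▸ hmem u hu
  · rintro rfl
    simp

theorem cons_mem_factorizations {u : List α} {l : List (List α)} :
    u :: l ∈ factorizations F w ↔
      u ∈ F ∧ u <+: w ∧ l ∈ factorizations F (w.drop u.length) := by
  simp only [factorizations, Set.mem_ofPred_eq, forall_mem_cons, flatten_cons]
  constructor
  · rintro ⟨⟨hu, hl⟩, rfl⟩
    exact ⟨hu, prefix_append _ _, hl, by simp⟩
  · rintro ⟨hu, ⟨v, rfl⟩, hl, hv⟩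
    rw [drop_left] at hv
    exact ⟨⟨hu, hl⟩, hv ▸ rfl⟩

theorem length_le_of_mem_factorizations (hnil : [] ∉ F) {l : List (List α)}
    (hl : l ∈ factorizations F w) : l.length ≤ w.length := by
  obtain ⟨hmem, rfl⟩ := hl
  rw [length_flatten, ← length_map (f := length)]
  refine length_le_sum_of_one_le _ fun n hn => ?_
  obtain ⟨u, hu, rfl⟩ := mem_map.1 hn
  exact length_pos_iff.2 fun h => hnil (h ▸ hmem u hu)

theorem finite_factorizations (hF : F.Finite) (hnil : [] ∉ F) (w : List α) :
    (factorizations F w).Finite := by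
  have : Finite F := hF
  refine ((finite_length_le F w.length).image (map Subtype.val)).subset fun l hl => ?_
  lift l to List F using hl.1
  exact ⟨l, by simpa using length_le_of_mem_factorizations hnil hl, rfl⟩

theorem factorizations_eq_biUnion (hw : w ≠ []) :
    factorizations F w =
      ⋃ u ∈ {u ∈ F | u <+: w}, cons u '' factorizations F (w.drop u.length) := by
  ext l
  cases l with
  | nil => simpa [factorizations] using hw.symm
  | cons u l =>
    simp only [cons_mem_factorizations, Set.mem_iUnion, Set.mem_image, cons.injEq]
    aesop

theorem neg_one_pow_countP_eq_prod_map [Monoid R] [HasDistribNeg R] (p : α → Bool)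
    (l : List α) :
    (-1 : R) ^ l.countP p = (l.map fun x => if p x then -1 else 1).prod := by
  induction l with
  | nil => simp
  | cons x l ih => by_cases h : p x <;> simp [h, ih, pow_succ']

variable [Semiring R] (c : List α → R)

theorem weightedFactorCount_nil (hnil : [] ∉ F) : weightedFactorCount F c [] = 1 := by
  simp [weightedFactorCount, factorizations_nil hnil]

theorem weightedFactorCount_eq_sum_prefix (hF : F.Finite) (hnil : [] ∉ F) (hw : w ≠ []) :
    weightedFactorCount F c w =
      ∑ᶠ u ∈ {u ∈ F | u <+: w}, c u * weightedFactorCount F c (w.drop u.length) := by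
  have hdisj : Set.PairwiseDisjoint {u ∈ F | u <+: w}
      fun u => cons u '' factorizations F (w.drop u.length) := by
    intro u _ v _ huv
    refine Set.disjoint_left.2 ?_
    rintro _ ⟨l, -, rfl⟩ ⟨l', -, h⟩
    exact huv (cons.inj h).1.symm
  rw [weightedFactorCount, factorizations_eq_biUnion hw,
    finsum_mem_biUnion hdisj (hF.subset fun u hu => hu.1)
      fun u _ => (finite_factorizations hF hnil _).image _]
  refine finsum_mem_congr rfl fun u _ => ?_
  rw [finsum_mem_image (cons_injective.injOn), weightedFactorCount,
    mul_finsum_mem' _ _ (finite_factorizations hF hnil _)]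
  simp only [map_cons, prod_cons]

end List

open List

def cartierFoataFactors : Set (List AB) := {[a], [b], [b, a]}

def baSign (u : List AB) : ℤ := if u = [b, a] then -1 else 1

theorem signedFactorCount_eq_weightedFactorCount (w : List AB) :
    signedFactorCount w = weightedFactorCount cartierFoataFactors baSign w := by
  refine finsum_mem_congr rfl fun l _ => ?_
  rw [neg_one_pow_countP_eq_prod_map]
  simp only [decide_eq_true_eq]
  rfl

theorem finite_cartierFoataFactors : cartierFoataFactors.Finite := by
  simp [cartierFoataFactors]

theorem nil_not_mem_cartierFoataFactors : [] ∉ cartierFoataFactors := by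
  simp [cartierFoataFactors]

theorem signedFactorCount_nil : signedFactorCount [] = 1 := by
  rw [signedFactorCount_eq_weightedFactorCount,
    weightedFactorCount_nil _ nil_not_mem_cartierFoataFactors]

theorem signedFactorCount_eq_sum_prefix {w : List AB} (hw : w ≠ []) :
    signedFactorCount w = ∑ᶠ u ∈ {u ∈ cartierFoataFactors | u <+: w},
      baSign u * signedFactorCount (w.drop u.length) := by
  simp only [signedFactorCount_eq_weightedFactorCount]
  exact weightedFactorCount_eq_sum_prefix _ finite_cartierFoataFactors
    nil_not_mem_cartierFoataFactors hw

theorem signedFactorCount_a_cons (t : List AB) :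
    signedFactorCount (a :: t) = signedFactorCount t := by
  have hprefixes : {u ∈ cartierFoataFactors | u <+: a :: t} = {[a]} := by
    ext u; grind [cartierFoataFactors]
  rw [signedFactorCount_eq_sum_prefix (cons_ne_nil _ _), hprefixes, finsum_mem_singleton]
  simp [baSign]

theorem signedFactorCount_b_cons {t : List AB} (ht : t.head? ≠ some a) :
    signedFactorCount (b :: t) = signedFactorCount t := by
  have hprefixes : {u ∈ cartierFoataFactors | u <+: b :: t} = {[b]} := by
    ext u; cases t <;> grind [cartierFoataFactors]
  rw [signedFactorCount_eq_sum_prefix (cons_ne_nil _ _), hprefixes, finsum_mem_singleton]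
  simp [baSign]

theorem signedFactorCount_b_a_cons (s : List AB) : signedFactorCount (b :: a :: s) = 0 := by
  have hprefixes : {u ∈ cartierFoataFactors | u <+: b :: a :: s} = {[b], [b, a]} := by
    ext u; grind [cartierFoataFactors]
  rw [signedFactorCount_eq_sum_prefix (cons_ne_nil _ _), hprefixes, finsum_mem_pair (by simp)]
  simp [baSign, signedFactorCount_a_cons]

def IsAStarBStar (w : List AB) : Prop := ∃ i j : ℕ, w = replicate i a ++ replicate j b

theorem isAStarBStar_nil : IsAStarBStar [] := ⟨0, 0, rfl⟩

theorem isAStarBStar_a_cons_iff {t : List AB} : IsAStarBStar (a :: t) ↔ IsAStarBStar t := by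
  constructor
  · rintro ⟨_ | i, _ | j, h⟩
    · simp at h
    · simp [replicate_succ] at h
    · exact ⟨i, 0, by simpa [replicate_succ] using h⟩
    · exact ⟨i, j + 1, by simpa [replicate_succ] using h⟩
  · rintro ⟨i, j, rfl⟩
    exact ⟨i + 1, j, rfl⟩

theorem isAStarBStar_b_cons_iff {t : List AB} : IsAStarBStar (b :: t) ↔ ∀ x ∈ t, x = b := by
  constructor
  · rintro ⟨_ | i, _ | j, h⟩
    · simp at h
    · simp only [replicate_zero, nil_append, replicate_succ, cons.injEq, true_and] at h
      exact h ▸ fun x => eq_of_mem_replicate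
    · simp [replicate_succ] at h
    · simp [replicate_succ] at h
  · intro h
    exact ⟨0, t.length + 1, by simp [replicate_succ, ← eq_replicate_iff.2 ⟨rfl, h⟩]⟩

theorem isAStarBStar_iff_of_head?_ne_a {t : List AB} (ht : t.head? ≠ some a) :
    IsAStarBStar t ↔ ∀ x ∈ t, x = b := by
  match t, ht with
  | [], _ => simpa using isAStarBStar_nil
  | a :: _, ht => simp at ht
  | b :: _, _ => simp [isAStarBStar_b_cons_iff]

open Classical in
theorem signedFactorCount_eq_ite (w : List AB) :
    signedFactorCount w = if IsAStarBStar w then 1 else 0 := by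
  induction w with
  | nil => simp [signedFactorCount_nil, isAStarBStar_nil]
  | cons x t ih =>
    match x, t with
    | a, t => rw [signedFactorCount_a_cons, ih, isAStarBStar_a_cons_iff]
    | b, a :: s => simp [signedFactorCount_b_a_cons, isAStarBStar_b_cons_iff]
    | b, [] | b, b :: _ =>
      rw [signedFactorCount_b_cons (by simp), ih, isAStarBStar_iff_of_head?_ne_a (by simp),
        isAStarBStar_b_cons_iff]

/-- Cartier–Foata identity `(a + b - ba)* = ` listing series of `a*b*`:
the signed number of factorizations of `w` into `{a, b, ba}` is `1` if
`w ∈ a*b*` and `0` otherwise. -/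
theorem cartier_foata_ab (w : List AB) :
    ((∃ i j : ℕ, w = List.replicate i a ++ List.replicate j b) →
      signedFactorCount w = 1) ∧
    (¬ (∃ i j : ℕ, w = List.replicate i a ++ List.replicate j b) →
      signedFactorCount w = 0) :=
  ⟨fun h => (signedFactorCount_eq_ite w).trans (if_pos h),
    fun h => (signedFactorCount_eq_ite w).trans (if_neg h)⟩
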